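/- Let u be a reduced word with u ≈ u_1·ũ, where ũ is the final segment of u (the commuting subword of all ends of u). Then the non-splitting reduct of u·u⁻¹ is [u·u⁻¹] ≈ u_1·ũ·u_1⁻¹, where u⁻¹ reverses the order of the letters of u. -/

import Mathlib

variable {V : Type*} [DecidableEq V] [Fintype V]

/-- A letter is a nonempty connected subset of the graph `G`
(connectedness of the induced subgraph includes nonemptiness). -/
def IsLetter (G : SimpleGraph V) (s : Finset V) : Prop :=
  (G.induce (↑s : Set V)).Connected

/-- The type of letters of `G`. -/
def Letter (G : SimpleGraph V) := {s : Finset V // IsLetter G s}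

/-- A word is a finite sequence of letters. -/
abbrev Word (G : SimpleGraph V) := List (Letter G)

/-- Two letters commute iff their union is not a letter (is disconnected). -/
def LCommute (G : SimpleGraph V) (s t : Letter G) : Prop :=
  ¬ IsLetter G (s.1 ∪ t.1)

/-- Two words commute if their letters pairwise commute. -/
def WCommute (G : SimpleGraph V) (u v : Word G) : Prop :=
  ∀ s ∈ u, ∀ t ∈ v, LCommute G s t

/-- One swap of two adjacent commuting letters. -/
def LSwapStep (G : SimpleGraph V) (w w' : Word G) : Prop :=
  ∃ (a b : Word G) (s t : Letter G), LCommute G s t ∧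
    w = a ++ s :: t :: b ∧ w' = a ++ t :: s :: b

/-- Equivalence (`≈`) of words: sequences of swaps of adjacent commuting letters. -/
def WEquiv (G : SimpleGraph V) : Word G → Word G → Prop :=
  Relation.ReflTransGen (LSwapStep G)

/-- A word is reduced if there is no pair of comparable letters such that the
smaller one commutes with all letters strictly in between. -/
def WIsReduced (G : SimpleGraph V) (w : Word G) : Prop :=
  ¬ ∃ (a b c : Word G) (s t : Letter G),
      w = a ++ s :: (b ++ t :: c) ∧
      ((s.1 ⊆ t.1 ∧ ∀ r ∈ b, LCommute G s r) ∨
       (t.1 ⊆ s.1 ∧ ∀ r ∈ b, LCommute G t r))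

/-- A splitting of a letter `s`: a (possibly empty) word whose letters are
proper subsets of `s`. -/
def IsSplitting (G : SimpleGraph V) (x : Word G) (s : Letter G) : Prop :=
  ∀ t ∈ x, t.1 ⊂ s.1

/-- `SplitStep G u v`: `u` is obtained from `v` by replacing one occurrence of a
letter by a splitting of it. -/
def SplitStep (G : SimpleGraph V) (u v : Word G) : Prop :=
  ∃ (a b x : Word G) (s : Letter G),
    v = a ++ s :: b ∧ IsSplitting G x s ∧ u = a ++ x ++ b

/-- One step of the splitting order up to equivalence. -/
def PrecStep (G : SimpleGraph V) (u v : Word G) : Prop :=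
  ∃ u' v', WEquiv G v v' ∧ SplitStep G u' v' ∧ WEquiv G u u'

/-- The splitting order `≺` on words. -/
def WPrec (G : SimpleGraph V) : Word G → Word G → Prop :=
  Relation.TransGen (PrecStep G)

/-- `u ≼ v` : `u ≺ v` or `u ≈ v`. -/
def WPreceq (G : SimpleGraph V) (u v : Word G) : Prop :=
  WPrec G u v ∨ WEquiv G u v

/-- Absorption: if `s ⊆ t`, replace a subword `s·t` (or `t·s`) by `t`. -/
def AbsorbStep (G : SimpleGraph V) (w w' : Word G) : Prop :=
  ∃ (a b : Word G) (s t : Letter G), s.1 ⊆ t.1 ∧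
    (w = a ++ s :: t :: b ∨ w = a ++ t :: s :: b) ∧ w' = a ++ t :: b

/-- A non-splitting reduction step: Commutation or Absorption. -/
def NSStep (G : SimpleGraph V) (w w' : Word G) : Prop :=
  LSwapStep G w w' ∨ AbsorbStep G w w'

/-- `NSRed G u v`: `v` is a non-splitting reduction of `u`, i.e. a reduced word
obtained from `u` by Commutation and Absorption steps only. -/
def NSRed (G : SimpleGraph V) (u v : Word G) : Prop :=
  Relation.ReflTransGen (NSStep G) u v ∧ WIsReduced G v

/-- The letter `t` is left-absorbed by the word `w`: `t` is contained in some
letter of `w` and commutes with all earlier letters. -/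
def LetterLeftAbsorbed (G : SimpleGraph V) (t : Letter G) (w : Word G) : Prop :=
  ∃ (a b : Word G) (s : Letter G), w = a ++ s :: b ∧ t.1 ⊆ s.1 ∧ ∀ r ∈ a, LCommute G t r

/-- The letter `t` is right-absorbed by the word `w`. -/
def LetterRightAbsorbed (G : SimpleGraph V) (t : Letter G) (w : Word G) : Prop :=
  ∃ (a b : Word G) (s : Letter G), w = a ++ s :: b ∧ t.1 ⊆ s.1 ∧ ∀ r ∈ b, LCommute G t r

/-- The letter `t` is properly left-absorbed by the word `w`. -/
def LetterProperLeftAbsorbed (G : SimpleGraph V) (t : Letter G) (w : Word G) : Prop :=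
  ∃ (a b : Word G) (s : Letter G), w = a ++ s :: b ∧ t.1 ⊂ s.1 ∧ ∀ r ∈ a, LCommute G t r

/-- The letter `t` is properly right-absorbed by the word `w`. -/
def LetterProperRightAbsorbed (G : SimpleGraph V) (t : Letter G) (w : Word G) : Prop :=
  ∃ (a b : Word G) (s : Letter G), w = a ++ s :: b ∧ t.1 ⊂ s.1 ∧ ∀ r ∈ b, LCommute G t r

/-- A word `u` is left-absorbed by `w` if each of its letters is. -/
def LeftAbsorbed (G : SimpleGraph V) (u w : Word G) : Prop :=
  ∀ t ∈ u, LetterLeftAbsorbed G t w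

/-- A word `u` is right-absorbed by `w` if each of its letters is. -/
def RightAbsorbed (G : SimpleGraph V) (u w : Word G) : Prop :=
  ∀ t ∈ u, LetterRightAbsorbed G t w

/-- A word `u` is properly left-absorbed by `w` if each of its letters is. -/
def ProperLeftAbsorbed (G : SimpleGraph V) (u w : Word G) : Prop :=
  ∀ t ∈ u, LetterProperLeftAbsorbed G t w

/-- A word `u` is properly right-absorbed by `w` if each of its letters is. -/
def ProperRightAbsorbed (G : SimpleGraph V) (u w : Word G) : Prop :=
  ∀ t ∈ u, LetterProperRightAbsorbed G t w

/-- A commuting word: its letters pairwise commute. -/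
def IsCommuting (G : SimpleGraph V) (u : Word G) : Prop :=
  List.Pairwise (LCommute G) u

/-- The letter `s` is an end of the word `u` if `u ≈ v·s` for some `v`. -/
def IsEnd (G : SimpleGraph V) (s : Letter G) (u : Word G) : Prop :=
  ∃ v, WEquiv G u (v ++ [s])

/-- `t` is the final segment of `u`: the commuting word consisting of all ends of `u`. -/
def IsFinalSegment (G : SimpleGraph V) (t u : Word G) : Prop :=
  IsCommuting G t ∧ ∀ s, s ∈ t ↔ IsEnd G s u

/-!
Every word reachable from `u·u⁻¹` by commutations and absorptions stays equivalent to
`m·c·m⁻¹` for some `m` and commuting `c` with `u ≈ m·c`. Since `u` is reduced, an absorption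
can only merge a letter of `m` with its own mirror image across a middle that commutes with it;
this moves the letter from `m` into `c`. Once the word is reduced, every end of `u` lies in `c`
(an end left in `m` would face its mirror image across letters commuting with it), so `c` is
the final segment of `u`, and `m ≈ u₁` by cancellation.
-/

section

omit [Fintype V]

variable {G : SimpleGraph V}

namespace List

variable {α : Type*}

theorem append_eq_append_cons {x₁ x₂ A R : List α} {s : α} (h : x₁ ++ x₂ = A ++ s :: R) :
    (∃ δ, x₁ = A ++ s :: δ ∧ R = δ ++ x₂) ∨ (∃ δ, A = x₁ ++ δ ∧ x₂ = δ ++ s :: R) := by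
  rcases List.append_eq_append_iff.mp h with ⟨δ, hA, hx₂⟩ | ⟨δ, hx₁, hR⟩
  · exact Or.inr ⟨δ, hA, hx₂⟩
  · rcases List.cons_eq_append_iff.mp hR with ⟨rfl, hx₂⟩ | ⟨δ', rfl, hR'⟩
    · exact Or.inr ⟨[], by simpa using hx₁.symm, hx₂⟩
    · exact Or.inl ⟨δ', hx₁, hR'⟩

theorem append_cons_eq_append_cons {A B ε D : List α} {x y : α}
    (h : A ++ x :: ε = B ++ y :: D) :
    (A = B ∧ x = y ∧ ε = D) ∨ (∃ F, B = A ++ x :: F ∧ ε = F ++ y :: D) ∨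
      (∃ F, A = B ++ y :: F ∧ D = F ++ x :: ε) := by
  rcases append_eq_append_cons h with ⟨F, hA, hD⟩ | ⟨_ | ⟨z, F⟩, hB, hε⟩
  · exact Or.inr (Or.inr ⟨F, hA, hD⟩)
  · obtain ⟨rfl, rfl⟩ := List.cons.inj hε
    exact Or.inl ⟨by simpa using hB.symm, rfl, rfl⟩
  · simp only [List.cons_append, List.cons.injEq] at hε
    obtain ⟨rfl, hε⟩ := hε
    exact Or.inr (Or.inl ⟨F, hB, hε⟩)

theorem append_cons_cons_eq_append_cons {p q A R : List α} {x y s : α}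
    (h : p ++ x :: y :: q = A ++ s :: R) :
    (∃ δ, p = A ++ s :: δ ∧ R = δ ++ x :: y :: q) ∨ (A = p ∧ s = x ∧ R = y :: q) ∨
      (A = p ++ [x] ∧ s = y ∧ R = q) ∨ (∃ δ, A = p ++ x :: y :: δ ∧ q = δ ++ s :: R) := by
  rcases append_eq_append_cons h with hp | ⟨_ | ⟨z, _ | ⟨z', δ⟩⟩, hA, hq⟩
  · exact Or.inl hp
  · obtain ⟨rfl, rfl⟩ := List.cons.inj hq
    exact Or.inr (Or.inl ⟨by simpa using hA, rfl, rfl⟩)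
  · obtain ⟨rfl, rfl, rfl⟩ : z = x ∧ s = y ∧ R = q := by simpa [eq_comm] using hq
    exact Or.inr (Or.inr (Or.inl ⟨hA, rfl, rfl⟩))
  · obtain ⟨rfl, rfl, hq'⟩ : z = x ∧ z' = y ∧ q = δ ++ s :: R := by simpa [eq_comm] using hq
    exact Or.inr (Or.inr (Or.inr ⟨δ, by simpa using hA, hq'⟩))

end List

namespace LCommute

variable {s t y : Letter G}

theorem symm (h : LCommute G s t) : LCommute G t s := by
  rwa [LCommute, Finset.union_comm]

theorem not_of_subset (h : s.1 ⊆ t.1) : ¬ LCommute G s t := by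
  simpa [LCommute, Finset.union_eq_right.mpr h] using t.2

theorem irrefl (s : Letter G) : ¬ LCommute G s s :=
  not_of_subset subset_rfl

theorem of_subset_right (hst : s.1 ⊆ t.1) (h : LCommute G y t) : LCommute G y s := by
  intro hys
  obtain ⟨⟨v, hv⟩⟩ := s.2.nonempty
  have hunion : ((y.1 ∪ t.1 : Finset V) : Set V) = ↑(y.1 ∪ s.1) ∪ ↑t.1 := by
    ext w
    simp only [Finset.coe_union, Set.mem_union, Finset.mem_coe]
    have := @hst w
    tauto
  apply h
  rw [IsLetter, hunion]
  exact SimpleGraph.induce_union_connected hys.preconnected t.2.preconnected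
    ⟨v, by simp [hv], hst hv⟩

end LCommute

theorem IsCommuting.nodup {c : Word G} (hc : IsCommuting G c) : c.Nodup :=
  hc.imp fun {a _} h hab => by subst hab; exact LCommute.irrefl a h

namespace WEquiv

variable {a b p q w : Word G}

theorem refl (w : Word G) : WEquiv G w w := Relation.ReflTransGen.refl

theorem trans {w₁ w₂ w₃ : Word G} (h₁ : WEquiv G w₁ w₂) (h₂ : WEquiv G w₂ w₃) :
    WEquiv G w₁ w₃ :=
  Relation.ReflTransGen.trans h₁ h₂

theorem symm (h : WEquiv G a b) : WEquiv G b a := by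
  induction h with
  | refl => exact refl _
  | tail _ hstep ih =>
    obtain ⟨p, q, s, t, hst, rfl, rfl⟩ := hstep
    exact Relation.ReflTransGen.head ⟨p, q, t, s, hst.symm, rfl, rfl⟩ ih

theorem swap {s t : Letter G} (h : LCommute G s t) (p q : Word G) :
    WEquiv G (p ++ s :: t :: q) (p ++ t :: s :: q) :=
  Relation.ReflTransGen.single ⟨p, q, s, t, h, rfl, rfl⟩

theorem append_left (p : Word G) (h : WEquiv G a b) : WEquiv G (p ++ a) (p ++ b) :=
  Relation.ReflTransGen.lift (p ++ ·)
    (fun _ _ ⟨x, y, s, t, hst, h₁, h₂⟩ => ⟨p ++ x, y, s, t, hst, by simp [h₁], by simp [h₂]⟩) _ _ h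

theorem append_right (q : Word G) (h : WEquiv G a b) : WEquiv G (a ++ q) (b ++ q) :=
  Relation.ReflTransGen.lift (· ++ q)
    (fun _ _ ⟨x, y, s, t, hst, h₁, h₂⟩ => ⟨x, y ++ q, s, t, hst, by simp [h₁], by simp [h₂]⟩) _ _ h

theorem append {a' b' : Word G} (ha : WEquiv G a a') (hb : WEquiv G b b') :
    WEquiv G (a ++ b) (a' ++ b') :=
  (ha.append_right b).trans (hb.append_left a')

theorem reverse (h : WEquiv G a b) : WEquiv G a.reverse b.reverse :=
  Relation.ReflTransGen.lift List.reverse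
    (fun _ _ ⟨x, y, s, t, hst, h₁, h₂⟩ =>
      ⟨y.reverse, x.reverse, t, s, hst.symm, by simp [h₁], by simp [h₂]⟩) _ _ h

theorem cons_append {x : Letter G} (hx : ∀ z ∈ p, LCommute G x z) (q : Word G) :
    WEquiv G (x :: (p ++ q)) (p ++ x :: q) := by
  induction p with
  | nil => exact refl _
  | cons z p ih =>
    exact (swap (hx z (by simp)) [] (p ++ q)).trans
      ((ih fun y hy => hx y (by simp [hy])).append_left [z])

theorem append_cons_congr {x : Letter G} {p' q' : Word G} (hx : ∀ z ∈ p ++ q, LCommute G x z)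
    (h : p ++ q = p' ++ q') : WEquiv G (p ++ x :: q) (p' ++ x :: q') := by
  have hx' : ∀ z ∈ p' ++ q', LCommute G x z := h ▸ hx
  refine (cons_append (fun z hz => hx z (by simp [hz])) q).symm.trans ?_
  rw [h]
  exact cons_append (fun z hz => hx' z (by simp [hz])) q'

theorem of_perm {c d : Word G} (h : c.Perm d) (hc : IsCommuting G c) : WEquiv G c d := by
  induction h with
  | nil => exact refl _
  | cons x _ ih => exact (ih (List.pairwise_cons.mp hc).2).append_left [x]
  | swap x y l => exact swap ((List.pairwise_cons.mp hc).1 x (by simp)) [] l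
  | trans p₁ _ ih₁ ih₂ => exact (ih₁ hc).trans (ih₂ ((p₁.pairwise_iff LCommute.symm).mp hc))

theorem track {x : Letter G} (h : WEquiv G (a ++ x :: b) w) :
    ∃ A B, w = A ++ x :: B ∧ (∀ z ∈ A, z ∈ a ∨ LCommute G x z) ∧ WEquiv G (a ++ b) (A ++ B) := by
  induction h with
  | refl => exact ⟨a, b, rfl, fun z hz => Or.inl hz, refl _⟩
  | tail _ hstep ih =>
    obtain ⟨A, B, hw, hA, hdel⟩ := ih
    obtain ⟨p, q, y, z, hyz, hw', rfl⟩ := hstep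
    rcases List.append_cons_cons_eq_append_cons (hw'.symm.trans hw) with
      ⟨δ, rfl, rfl⟩ | ⟨rfl, rfl, rfl⟩ | ⟨rfl, rfl, rfl⟩ | ⟨δ, rfl, rfl⟩
    · exact ⟨A, δ ++ z :: y :: q, by simp, hA, hdel.trans (by simpa using swap hyz (A ++ δ) q)⟩
    · refine ⟨A ++ [z], q, by simp, fun r hr => ?_, by simpa using hdel⟩
      rcases List.mem_append.mp hr with hr | hr
      exacts [hA r hr, Or.inr (List.mem_singleton.mp hr ▸ hyz)]
    · exact ⟨p, y :: B, by simp, fun r hr => hA r (by simp [hr]), by simpa using hdel⟩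
    · refine ⟨p ++ z :: y :: δ, B, by simp, fun r hr => hA r (by simp at hr ⊢; tauto), ?_⟩
      exact hdel.trans (by simpa using swap hyz p (δ ++ B))

theorem cancel_cons {x : Letter G} (h : WEquiv G (x :: p) (x :: q)) : WEquiv G p q := by
  obtain ⟨_ | ⟨z, A⟩, B, hq, hA, hdel⟩ := track (a := []) h
  · obtain rfl : q = B := by simpa using hq
    simpa using hdel
  · obtain ⟨rfl, -⟩ := List.cons.inj hq
    exact absurd ((hA x (by simp)).resolve_left (by simp)) (LCommute.irrefl x)

theorem cancel_left : ∀ (c : Word G), WEquiv G (c ++ p) (c ++ q) → WEquiv G p q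
  | [], h => h
  | _ :: c, h => cancel_left c (cancel_cons h)

theorem cancel_right (c : Word G) (h : WEquiv G (p ++ c) (q ++ c)) : WEquiv G p q := by
  have := (cancel_left c.reverse (by simpa using h.reverse)).reverse
  rwa [List.reverse_reverse, List.reverse_reverse] at this

theorem track_adjacent_erase_fst {s t : Letter G} (hst : ¬ LCommute G s t)
    (h : WEquiv G (a ++ s :: t :: b) w) :
    ∃ A M B, w = A ++ s :: (M ++ t :: B) ∧ (∀ z ∈ M, LCommute G s z ∨ LCommute G t z) ∧
      WEquiv G (a ++ t :: b) (A ++ (M ++ t :: B)) := by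
  induction h with
  | refl => exact ⟨a, [], b, rfl, by simp, refl _⟩
  | tail _ hstep ih =>
    obtain ⟨A, M, B, hw, hM, hdel⟩ := ih
    obtain ⟨p, q, y, z, hyz, hw', rfl⟩ := hstep
    rcases List.append_cons_cons_eq_append_cons (hw'.symm.trans hw) with
      ⟨δ, rfl, hR⟩ | ⟨rfl, rfl, hR⟩ | ⟨rfl, rfl, rfl⟩ | ⟨δ, rfl, rfl⟩
    · have hR' : WEquiv G (M ++ t :: B) (δ ++ z :: y :: q) := hR ▸ swap hyz δ q
      obtain ⟨M', B', hR'', hM', -⟩ := track hR'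
      refine ⟨A, M', B', by simp [hR''], fun r hr => ?_, ?_⟩
      · exact (hM' r hr).elim (fun hr => hM r hr) Or.inr
      · exact hdel.trans (by simpa [hR''] using hR'.append_left A)
    · rcases List.append_eq_cons_iff.mp hR with ⟨rfl, hq⟩ | ⟨M', rfl, rfl⟩
      · exact absurd (List.cons.inj hq).1 (fun h => hst (h ▸ hyz))
      · exact ⟨A ++ [z], M', B, by simp, fun r hr => hM r (by simp [hr]), by simpa using hdel⟩
    · refine ⟨p, y :: M, B, by simp, fun r hr => ?_, by simpa using hdel⟩
      rcases List.mem_cons.mp hr with rfl | hr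
      exacts [Or.inl hyz.symm, hM r hr]
    · refine ⟨p ++ z :: y :: δ, M, B, by simp, hM, ?_⟩
      exact hdel.trans (by simpa using swap hyz p (δ ++ (M ++ t :: B)))

theorem track_adjacent_erase_snd {s t : Letter G} (hst : ¬ LCommute G s t)
    (h : WEquiv G (a ++ s :: t :: b) w) :
    ∃ A M B, w = A ++ s :: (M ++ t :: B) ∧ (∀ z ∈ M, LCommute G s z ∨ LCommute G t z) ∧
      WEquiv G (a ++ s :: b) (A ++ s :: (M ++ B)) := by
  have hrev : WEquiv G (b.reverse ++ t :: s :: a.reverse) w.reverse := by simpa using h.reverse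
  obtain ⟨A, M, B, hw, hM, hdel⟩ := track_adjacent_erase_fst (fun h => hst h.symm) hrev
  refine ⟨B.reverse, M.reverse, A.reverse, by simpa using congrArg List.reverse hw,
    fun z hz => (hM z (List.mem_reverse.mp hz)).symm, by simpa using hdel.reverse⟩

end WEquiv

/-- `WIsReduced G w` says exactly that `w` has no subword `s·b·t` with `Absorbable G s b t`. -/
def Absorbable (G : SimpleGraph V) (s : Letter G) (b : Word G) (t : Letter G) : Prop :=
  (s.1 ⊆ t.1 ∧ ∀ r ∈ b, LCommute G s r) ∨ (t.1 ⊆ s.1 ∧ ∀ r ∈ b, LCommute G t r)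

namespace Absorbable

variable {s t : Letter G} {b : Word G}

theorem of_forall_or (hcmp : s.1 ⊆ t.1 ∨ t.1 ⊆ s.1)
    (hb : ∀ z ∈ b, LCommute G s z ∨ LCommute G t z) : Absorbable G s b t := by
  rcases hcmp with hst | hts
  · exact Or.inl ⟨hst, fun z hz => (hb z hz).elim id fun h => (h.symm.of_subset_right hst).symm⟩
  · exact Or.inr ⟨hts, fun z hz => (hb z hz).elim (fun h => (h.symm.of_subset_right hts).symm) id⟩

theorem subset_or_subset (h : Absorbable G s b t) : s.1 ⊆ t.1 ∨ t.1 ⊆ s.1 :=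
  h.imp And.left And.left

theorem not_lCommute (h : Absorbable G s b t) : ¬ LCommute G s t :=
  h.subset_or_subset.elim LCommute.not_of_subset fun hts hst => LCommute.not_of_subset hts hst.symm

theorem mono {b' : Word G} (h : Absorbable G s b t) (hb : b' ⊆ b) : Absorbable G s b' t :=
  h.imp (fun ⟨hst, hr⟩ => ⟨hst, fun r hr' => hr r (hb hr')⟩)
    fun ⟨hts, hr⟩ => ⟨hts, fun r hr' => hr r (hb hr')⟩

theorem reverse (h : Absorbable G s b t) : Absorbable G t b.reverse s :=
  h.symm.imp (fun ⟨hts, hr⟩ => ⟨hts, fun r hr' => hr r (List.mem_reverse.mp hr')⟩)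
    fun ⟨hst, hr⟩ => ⟨hst, fun r hr' => hr r (List.mem_reverse.mp hr')⟩

theorem left_not_mem (h : Absorbable G s b t) : s ∉ b := fun hs =>
  h.elim (fun ⟨_, hr⟩ => LCommute.irrefl s (hr s hs))
    fun ⟨hts, hr⟩ => LCommute.not_of_subset hts (hr s hs)

theorem exists_wequiv_adjacent (h : Absorbable G s b t) (a c : Word G) :
    ∃ a' c', WEquiv G (a ++ s :: (b ++ t :: c)) (a' ++ s :: t :: c') := by
  rcases h with ⟨-, hs⟩ | ⟨-, ht⟩
  · exact ⟨a ++ b, c, by simpa using (WEquiv.cons_append hs (t :: c)).append_left a⟩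
  · exact ⟨a, b ++ c, by simpa using (WEquiv.cons_append ht c).symm.append_left (a ++ [s])⟩

end Absorbable

namespace WIsReduced

variable {u w : Word G}

theorem not_absorbable {a b c : Word G} {s t : Letter G} (hw : WIsReduced G w)
    (h : w = a ++ s :: (b ++ t :: c)) : ¬ Absorbable G s b t :=
  fun hst => hw ⟨a, b, c, s, t, h, hst⟩

theorem of_wequiv (hu : WIsReduced G u) (h : WEquiv G u w) : WIsReduced G w := by
  rintro ⟨a, b, c, s, t, rfl, hst : Absorbable G s b t⟩
  obtain ⟨a', c', hadj⟩ := hst.exists_wequiv_adjacent a c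
  obtain ⟨A, M, B, hu', hM, -⟩ :=
    (hadj.symm.trans h.symm).track_adjacent_erase_fst hst.not_lCommute
  exact hu.not_absorbable hu' (Absorbable.of_forall_or hst.subset_or_subset hM)

theorem reverse (hw : WIsReduced G w) : WIsReduced G w.reverse := by
  rintro ⟨a, b, c, s, t, h, hst : Absorbable G s b t⟩
  exact hw.not_absorbable (by simpa using congrArg List.reverse h) hst.reverse

end WIsReduced

theorem eq_mirror_of_absorbable {m c A M B : Word G} {x y : Letter G}
    (hmc : WIsReduced G (m ++ c)) (hc : IsCommuting G c)
    (h : m ++ c ++ m.reverse = A ++ x :: (M ++ y :: B)) (hxy : Absorbable G x M y) :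
    y = x ∧ ∃ δ, m = A ++ x :: δ ∧ M = δ ++ c ++ δ.reverse ∧ B = A.reverse := by
  have hcm : WIsReduced G (c ++ m.reverse) := by
    have hrev := hmc.reverse
    rw [List.reverse_append] at hrev
    exact hrev.of_wequiv ((WEquiv.of_perm (List.reverse_perm c).symm hc).symm.append_right _)
  have h' : (m ++ c) ++ m.reverse = A ++ x :: M ++ y :: B := by simpa using h
  rcases List.append_eq_append_cons h' with ⟨δ, hy, -⟩ | ⟨E, hE, hmr⟩
  · exact absurd hxy (hmc.not_absorbable (a := A) (c := δ) (by simp [hy]))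
  rcases List.append_eq_append_cons (by simpa using hE.symm : m ++ (c ++ E) = A ++ x :: M) with
    ⟨ε, hm, hM⟩ | ⟨F, -, hcE⟩
  · have hm' : m = B.reverse ++ y :: E.reverse := by simpa using congrArg List.reverse hmr
    rcases List.append_cons_eq_append_cons (hm.symm.trans hm') with
      ⟨hBA, rfl, rfl⟩ | ⟨F, -, hε⟩ | ⟨F, -, hE'⟩
    · exact ⟨rfl, E.reverse, hm, by simp [hM], by simp [hBA]⟩
    -- the mirror image of `y` lies after `x` in `m`, so `m·c` is not reduced
    · refine absurd (hxy.mono (b' := F) ?_) (hmc.not_absorbable (a := A) (c := E.reverse ++ c) ?_)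
      · simp [hM, hε]
      · simp [hm, hε]
    -- the mirror image of `y` lies before `x` in `m`, so the mirror image of `x` lies in `M`
    · have hxE : x ∈ E.reverse := by simp [hE']
      exact absurd (by simp [hM, List.mem_reverse.mp hxE]) hxy.left_not_mem
  · refine absurd hxy (hcm.not_absorbable (a := F) (c := B) ?_)
    rw [hmr, ← List.append_assoc, hcE]
    simp

def HasMirrorForm (G : SimpleGraph V) (u w : Word G) : Prop :=
  ∃ m c, WEquiv G u (m ++ c) ∧ IsCommuting G c ∧ WEquiv G w (m ++ c ++ m.reverse)

namespace HasMirrorForm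

variable {u w w' : Word G}

theorem of_mirror {A δ c P Q : Word G} {x : Letter G}
    (hu : WEquiv G u (A ++ x :: δ ++ c)) (hc : IsCommuting G c)
    (hx : ∀ z ∈ δ ++ c ++ δ.reverse, LCommute G x z) (hPQ : P ++ Q = δ ++ c ++ δ.reverse)
    (hw : WEquiv G w (A ++ (P ++ x :: Q) ++ A.reverse)) : HasMirrorForm G u w := by
  refine ⟨A ++ δ, x :: c, ?_, List.pairwise_cons.mpr ⟨fun z hz => hx z (by simp [hz]), hc⟩, ?_⟩
  · have hmove : WEquiv G (x :: (δ ++ c)) (δ ++ x :: c) :=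
      WEquiv.cons_append (fun z hz => hx z (by simp [hz])) c
    simpa using hu.trans (by simpa using hmove.append_left A)
  · have hmove : WEquiv G (P ++ x :: Q) (δ ++ x :: (c ++ δ.reverse)) :=
      WEquiv.append_cons_congr (hPQ ▸ hx) (by simp [hPQ])
    simpa using hw.trans ((hmove.append_left A).append_right A.reverse)

theorem of_absorbStep (hu : WIsReduced G u) (h : HasMirrorForm G u w) (hs : AbsorbStep G w w') :
    HasMirrorForm G u w' := by
  obtain ⟨m, c, hmc, hc, hw⟩ := h
  have hmc' := hu.of_wequiv hmc
  obtain ⟨a, b, s, t, hst, rfl | rfl, rfl⟩ := hs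
  · obtain ⟨A, M, B, hE, hM, hdel⟩ :=
      hw.track_adjacent_erase_fst (LCommute.not_of_subset hst)
    obtain ⟨rfl, δ, rfl, rfl, rfl⟩ :=
      eq_mirror_of_absorbable hmc' hc hE (Absorbable.of_forall_or (Or.inl hst) hM)
    exact of_mirror hmc hc (fun z hz => (hM z hz).elim id id) (List.append_nil _)
      (by simpa using hdel)
  · obtain ⟨A, M, B, hE, hM, hdel⟩ :=
      hw.track_adjacent_erase_snd fun h => LCommute.not_of_subset hst h.symm
    obtain ⟨rfl, δ, rfl, rfl, rfl⟩ :=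
      eq_mirror_of_absorbable hmc' hc hE (Absorbable.of_forall_or (Or.inr hst) hM)
    exact of_mirror hmc hc (fun z hz => (hM z hz).elim id id) (List.nil_append _)
      (by simpa using hdel)

theorem of_reflTransGen_nsStep (hu : WIsReduced G u)
    (h : Relation.ReflTransGen (NSStep G) (u ++ u.reverse) w) : HasMirrorForm G u w := by
  induction h with
  | refl =>
    exact ⟨u, [], by simpa using WEquiv.refl u, List.Pairwise.nil, by simpa using WEquiv.refl _⟩
  | tail _ hstep ih =>
    rcases hstep with hswap | habsorb
    · obtain ⟨m, c, hmc, hc, hw⟩ := ih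
      exact ⟨m, c, hmc, hc, (WEquiv.symm (Relation.ReflTransGen.single hswap)).trans hw⟩
    · exact ih.of_absorbStep hu habsorb

end HasMirrorForm

theorem isEnd_congr {x : Letter G} {u w : Word G} (h : WEquiv G u w) :
    IsEnd G x u ↔ IsEnd G x w :=
  ⟨fun ⟨v, hv⟩ => ⟨v, h.symm.trans hv⟩, fun ⟨v, hv⟩ => ⟨v, h.trans hv⟩⟩

theorem IsEnd.exists_eq_append_cons {x : Letter G} {w : Word G} (h : IsEnd G x w) :
    ∃ P Q, w = P ++ x :: Q ∧ ∀ z ∈ Q, LCommute G x z := by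
  obtain ⟨v, hv⟩ := h
  obtain ⟨A, B, hw, hA, -⟩ := WEquiv.track (a := []) (by simpa using hv.reverse.symm)
  exact ⟨B.reverse, A.reverse, by simpa using congrArg List.reverse hw,
    fun z hz => (hA z (List.mem_reverse.mp hz)).resolve_left (by simp)⟩

theorem mem_iff_isEnd {m c : Word G} {x : Letter G} (hr : WIsReduced G (m ++ c ++ m.reverse))
    (hc : IsCommuting G c) : x ∈ c ↔ IsEnd G x (m ++ c) := by
  constructor
  · intro hx
    obtain ⟨c₁, c₂, rfl⟩ := List.append_of_mem hx
    have hx₂ : ∀ z ∈ c₂, LCommute G x z :=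
      (List.pairwise_cons.mp (List.pairwise_append.mp hc).2.1).1
    exact ⟨m ++ c₁ ++ c₂, by simpa using (WEquiv.cons_append hx₂ []).append_left (m ++ c₁)⟩
  · intro hx
    obtain ⟨P, Q, hPQ, hQ⟩ := hx.exists_eq_append_cons
    rcases List.append_eq_append_cons hPQ with ⟨δ, rfl, rfl⟩ | ⟨δ, -, rfl⟩
    · refine absurd (Or.inl ⟨subset_rfl, fun z hz => hQ z ?_⟩)
        (hr.not_absorbable (a := P) (b := δ ++ c ++ δ.reverse) (c := P.reverse) (by simp))
      simp only [List.mem_append, List.mem_reverse] at hz ⊢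
      tauto
    · simp

end

/-- If `u` is reduced and `u ≈ u₁·ũ` where `ũ` is the final segment of `u`,
then `[u·u⁻¹] ≈ u₁·ũ·u₁⁻¹`. -/
theorem reduct_self_inverse (G : SimpleGraph V) (u u1 t : Word G)
    (hu : WIsReduced G u) (hdec : WEquiv G u (u1 ++ t))
    (hfin : IsFinalSegment G t u) :
    ∀ r, NSRed G (u ++ u.reverse) r → WEquiv G r (u1 ++ t ++ u1.reverse) := by
  rintro r ⟨hsteps, hr⟩
  obtain ⟨m, c, hmc, hc, hrm⟩ := HasMirrorForm.of_reflTransGen_nsStep hu hsteps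
  have hct : c.Perm t := (List.perm_ext_iff_of_nodup hc.nodup hfin.1.nodup).mpr fun x => by
    rw [hfin.2 x, isEnd_congr hmc, mem_iff_isEnd (hr.of_wequiv hrm) hc]
  have htc : WEquiv G t c := WEquiv.of_perm hct.symm hfin.1
  have hmu : WEquiv G m u1 :=
    WEquiv.cancel_right c (hmc.symm.trans (hdec.trans (htc.append_left u1)))
  exact hrm.trans ((hmu.append htc.symm).append hmu.reverse)
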